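/- arXiv:2204.13907 — 2 statements merged into one kernel-verified Lean document; each statement's English description precedes it below -/
import Mathlib

section
/- Let $b \ge 2$ be an integer, $B \subseteq \mathbb{Z}_{\ge 0}$ a finite set with $\#B = b$, and let $c = \#(B \setminus \{0,1,\dots,b-1\})$. Then for all $\xi \in \mathbb{R}$, $\left|\frac{1}{b}\sum_{x\in B} e^{-2\pi i x\xi}\right| \ge 1 - \frac{(b\pi\xi)^2}{6} - \frac{2c}{b}$. -/
/-!
Centre the sum over `{0, …, b-1}`: after multiplication by a unimodular factor its terms become
`exp (i (j - m) θ)` with `m = (b - 1) / 2`, so its norm is at least `∑ cos ((j - m) θ)`, and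
`cos x ≥ 1 - x² / 2` together with `∑ (j - m)² = b (b² - 1) / 12` gives the quadratic loss.
Replacing `{0, …, b-1}` by `B` exchanges `c` unimodular terms for `c` others, which costs at most `2c`.
-/

open Complex Finset

lemma sum_range_sub_sq (n : ℕ) (a : ℝ) :
    ∑ j ∈ range n, ((j : ℝ) - a) ^ 2 = n * (n - 1) * (2 * n - 1) / 6 - a * n * (n - 1) + n * a ^ 2 := by
  induction n with
  | zero => simp
  | succ n ih => rw [sum_range_succ, ih]; push_cast; ring

lemma sum_range_sub_half_sq (n : ℕ) :
    ∑ j ∈ range n, ((j : ℝ) - (n - 1) / 2) ^ 2 = n * ((n : ℝ) ^ 2 - 1) / 12 := by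
  rw [sum_range_sub_sq]; ring

lemma norm_sum_sub_sum_le_card_sdiff {ι E : Type*} [DecidableEq ι] [SeminormedAddCommGroup E]
    (s t : Finset ι) {f : ι → E} (hf : ∀ i, ‖f i‖ ≤ 1) :
    ‖∑ i ∈ s, f i - ∑ i ∈ t, f i‖ ≤ #(s \ t) + #(t \ s) := by
  have bound (u : Finset ι) : ‖∑ i ∈ u, f i‖ ≤ #u := by
    simpa using norm_sum_le_of_le u (n := fun _ => (1 : ℝ)) fun i _ => hf i
  rw [← sum_sdiff_sub_sum_sdiff]
  exact (norm_sub_le _ _).trans (add_le_add (bound _) (bound _))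

lemma norm_sum_range_exp_mul_I_ge (n : ℕ) (θ : ℝ) :
    n - n * (n * θ) ^ 2 / 24 ≤ ‖∑ j ∈ range n, exp ((j * θ : ℝ) * I)‖ := by
  set m : ℝ := (n - 1) / 2
  have centre (j : ℕ) : exp ((-m * θ : ℝ) * I) * exp ((j * θ : ℝ) * I) = exp (((j - m) * θ : ℝ) * I) := by
    rw [← exp_add]; push_cast; ring_nf
  have cos_ge (j : ℕ) : 1 - θ ^ 2 / 2 * ((j : ℝ) - m) ^ 2 ≤ Real.cos ((j - m) * θ) := by
    linarith [Real.one_sub_sq_div_two_le_cos (x := (j - m) * θ)]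
  calc (n : ℝ) - n * (n * θ) ^ 2 / 24
      ≤ ∑ j ∈ range n, (1 - θ ^ 2 / 2 * ((j : ℝ) - m) ^ 2) := by
        rw [sum_sub_distrib, ← mul_sum, sum_range_sub_half_sq]
        simp only [sum_const, card_range, nsmul_eq_mul, mul_one]
        nlinarith [sq_nonneg θ, (n.cast_nonneg : (0 : ℝ) ≤ n)]
    _ ≤ ∑ j ∈ range n, Real.cos ((j - m) * θ) := sum_le_sum fun j _ => cos_ge j
    _ = (exp ((-m * θ : ℝ) * I) * ∑ j ∈ range n, exp ((j * θ : ℝ) * I)).re := by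
        simp only [mul_sum, centre, re_sum, exp_ofReal_mul_I_re]
    _ ≤ ‖∑ j ∈ range n, exp ((j * θ : ℝ) * I)‖ :=
        (re_le_norm _).trans_eq (by rw [norm_mul, norm_exp_ofReal_mul_I, one_mul])

theorem mask_fourier_lower_bound
    (b : ℕ) (hb : 2 ≤ b) (B : Finset ℕ) (hcard : B.card = b)
    (c : ℕ) (hc : c = (B \ Finset.range b).card) (ξ : ℝ) :
    ‖(b : ℂ)⁻¹ * ∑ x ∈ B, Complex.exp (-2 * Real.pi * Complex.I * (x : ℂ) * (ξ : ℂ))‖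
      ≥ 1 - (b * Real.pi * ξ) ^ 2 / 6 - 2 * c / b := by
  set e : ℕ → ℂ := fun x => exp ((x * (-2 * Real.pi * ξ) : ℝ) * I)
  have he : ∀ x : ℕ, exp (-2 * Real.pi * I * x * ξ) = e x := fun x => by
    simp only [e]; push_cast; ring_nf
  have card_range_sdiff : #(range b \ B) = c := by
    rw [hc, card_sdiff_comm (by rw [hcard, card_range])]
  have exchange := norm_sum_sub_sum_le_card_sdiff (range b) B (f := e)
    fun x => (norm_exp_ofReal_mul_I _).le
  have centred := norm_sum_range_exp_mul_I_ge b (-2 * Real.pi * ξ)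
  rw [card_range_sdiff, ← hc] at exchange
  have norm_sum_ge : b - b * (b * Real.pi * ξ) ^ 2 / 6 - 2 * c ≤ ‖∑ x ∈ B, e x‖ := by
    linarith [norm_sub_norm_le (∑ j ∈ range b, e j) (∑ x ∈ B, e x)]
  have hb0 : (0 : ℝ) < b := Nat.cast_pos.mpr (by omega)
  simp only [he]
  rw [ge_iff_le, norm_mul, norm_inv, norm_natCast, inv_mul_eq_div, le_div_iff₀ hb0]
  exact le_of_eq_of_le (by field_simp) norm_sum_ge
end

section
/- Let $\{b_k\}$, $\{N_k\}$ be positive integers with $N_k \ge b_k \ge 2$ and $b_k \mid N_k$ for all $k$, and suppose $\sum_{k=1}^\infty \frac{b_k - 1}{N_1 N_2 \cdots N_k} < \infty$ and $\sum_{k=1}^\infty \frac{c_k}{b_k} < \infty$, where $B_k \subseteq \mathbb{Z}_{\ge 0}$ satisfies $B_k \equiv \{0,\dots,b_k-1\} \pmod{N_k}$ and $c_k = \#(B_k \setminus \{0,\dots,b_k-1\})$. Then with $A_k = (N_1\cdots N_k)^{-1}B_k$, the condition $\sum_{k=1}^\infty \frac{1}{\#A_k}\sum_{a\in A_k}\frac{a}{1+a}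 < \infty$ holds, hence the infinite convolution $\delta_{A_1}*\delta_{A_2}*\cdots$ exists. -/
/-!
Realise `uniformDisc (A k)` as the law of the coordinate `ω k` on the product probability space
`ℕ → ℝ`. The coordinates are independent, so `convSeq A n` is the law of the partial sum
`∑ k ≤ n, ω k`. The summability hypothesis says `∑ E[X_k / (1 + X_k)] < ∞` for the nonnegative
`X_k = ω k`, hence `∑ X_k / (1 + X_k) < ∞` almost surely; then `X_k → 0`, so eventually
`X_k ≤ 2 X_k / (1 + X_k)` and `∑ X_k` converges almost surely. Almost sure convergence of the
partial sums gives weak convergence of their laws by dominated convergence.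

The summability condition itself comes from `a / (1 + a) ≤ min a 1`: the elements of `B k` below
`b k` contribute at most `(b k - 1) / (N 0 ⋯ N k)` each, the `c k` others at most `1` each.
-/

open MeasureTheory Filter Finset

/-- The uniform discrete probability measure on a finite subset of `ℝ`. -/
noncomputable def uniformDisc (A : Finset ℝ) : Measure ℝ :=
  ((A.card : ENNReal))⁻¹ • ∑ a ∈ A, Measure.dirac a

/-- `convSeq A n` is the convolution `δ_{A 0} ∗ δ_{A 1} ∗ ⋯ ∗ δ_{A n}`. -/
noncomputable def convSeq (A : ℕ → Finset ℝ) : ℕ → Measure ℝ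
  | 0 => uniformDisc (A 0)
  | n + 1 => Measure.conv (convSeq A n) (uniformDisc (A (n + 1)))

/-- `ν n` converges weakly to `μ`. -/
def WeakLimit (ν : ℕ → Measure ℝ) (μ : Measure ℝ) : Prop :=
  ∀ f : BoundedContinuousFunction ℝ ℝ,
    Tendsto (fun n => ∫ x, f x ∂(ν n)) atTop (nhds (∫ x, f x ∂μ))

open ProbabilityTheory
open scoped ENNReal Topology

lemma div_one_add_nonneg {a : ℝ} (ha : 0 ≤ a) : 0 ≤ a / (1 + a) :=
  div_nonneg ha (by linarith)

lemma div_one_add_le_self {a : ℝ} (ha : 0 ≤ a) : a / (1 + a) ≤ a :=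
  div_le_self ha (le_add_of_nonneg_right ha)

lemma div_one_add_le_one {a : ℝ} (ha : 0 ≤ a) : a / (1 + a) ≤ 1 :=
  div_le_one_of_le₀ (by linarith) (by linarith)

lemma summable_of_summable_div_one_add {x : ℕ → ℝ} (hx : ∀ k, 0 ≤ x k)
    (h : Summable fun k => x k / (1 + x k)) : Summable x := by
  refine .of_norm_bounded_eventually_nat (h.mul_left 2) ?_
  filter_upwards [h.tendsto_atTop_zero.eventually_lt_const one_half_pos] with k hk
  have h1 : 0 < 1 + x k := by linarith [hx k]
  rw [Real.norm_of_nonneg (hx k), mul_div_assoc', le_div_iff₀ h1]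
  rw [div_lt_iff₀ h1] at hk
  nlinarith [hx k]

theorem ae_summable_of_tsum_lintegral_div_one_add_ne_top {Ω : Type*} [MeasurableSpace Ω]
    {μ : Measure Ω} {X : ℕ → Ω → ℝ} (hX : ∀ k, Measurable (X k))
    (hnonneg : ∀ k, ∀ᵐ ω ∂μ, 0 ≤ X k ω)
    (h : ∑' k, ∫⁻ ω, ENNReal.ofReal (X k ω / (1 + X k ω)) ∂μ ≠ ∞) :
    ∀ᵐ ω ∂μ, Summable fun k => X k ω := by
  have hmeas : ∀ k, Measurable fun ω => ENNReal.ofReal (X k ω / (1 + X k ω)) := fun k =>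
    ENNReal.measurable_ofReal.comp ((hX k).div (measurable_const.add (hX k)))
  rw [← lintegral_tsum fun k => (hmeas k).aemeasurable] at h
  filter_upwards [ae_lt_top (Measurable.tsum hmeas) h, ae_all_iff.2 hnonneg]
    with ω hfin hω
  refine summable_of_summable_div_one_add hω ?_
  refine (ENNReal.summable_toReal hfin.ne).congr fun k => ?_
  exact ENNReal.toReal_ofReal (div_one_add_nonneg (hω k))

theorem weakLimit_map_of_ae_tendsto {Ω : Type*} [MeasurableSpace Ω] {P : Measure Ω}
    [IsFiniteMeasure P] {Y : ℕ → Ω → ℝ} {L : Ω → ℝ} (hY : ∀ n, Measurable (Y n))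
    (hlim : ∀ᵐ ω ∂P, Tendsto (fun n => Y n ω) atTop (𝓝 (L ω))) :
    WeakLimit (fun n => P.map (Y n)) (P.map L) := by
  have hL : AEMeasurable L P :=
    aemeasurable_of_tendsto_metrizable_ae' (fun n => (hY n).aemeasurable) hlim
  intro f
  simp only [integral_map (hY _).aemeasurable f.continuous.aestronglyMeasurable,
    integral_map hL f.continuous.aestronglyMeasurable]
  refine tendsto_integral_of_dominated_convergence (fun _ => ‖f‖)
    (fun n => (f.continuous.measurable.comp (hY n)).aestronglyMeasurable)
    (integrable_const _) (fun n => .of_forall fun ω => f.norm_coe_le_norm _) ?_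
  filter_upwards [hlim] with ω hω
  exact (f.continuous.tendsto (L ω)).comp hω

section uniformDisc

variable {A : Finset ℝ}

lemma isProbabilityMeasure_uniformDisc (hA : A.Nonempty) :
    IsProbabilityMeasure (uniformDisc A) := by
  constructor
  simp [uniformDisc, ENNReal.inv_mul_cancel, hA.card_pos.ne']

lemma lintegral_uniformDisc (f : ℝ → ℝ≥0∞) :
    ∫⁻ x, f x ∂uniformDisc A = (A.card : ℝ≥0∞)⁻¹ * ∑ a ∈ A, f a := by
  simp [uniformDisc]

lemma ae_mem_uniformDisc : ∀ᵐ x ∂uniformDisc A, x ∈ A := by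
  simp [uniformDisc, ae_iff]

end uniformDisc

lemma infinitePi_map_sum_range_eq_convSeq (A : ℕ → Finset ℝ)
    [∀ k, IsProbabilityMeasure (uniformDisc (A k))] (n : ℕ) :
    (Measure.infinitePi fun k => uniformDisc (A k)).map (fun ω => ∑ k ∈ range (n + 1), ω k)
      = convSeq A n := by
  have hindep : iIndepFun (fun k (ω : ℕ → ℝ) => ω k)
      (Measure.infinitePi fun k => uniformDisc (A k)) :=
    iIndepFun_infinitePi (X := fun _ => id) fun _ => measurable_id
  induction n with
  | zero => simpa [convSeq] using Measure.infinitePi_map_eval _ 0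
  | succ n ih =>
    have hsplit : (fun ω : ℕ → ℝ => ∑ k ∈ range (n + 2), ω k)
        = (∑ k ∈ range (n + 1), fun ω : ℕ → ℝ => ω k) + fun ω => ω (n + 1) := by
      ext ω; simp [sum_range_succ _ (n + 1)]
    rw [hsplit, (hindep.indepFun_finsetSum_of_notMem (fun k => measurable_pi_apply k)
      (by simp)).map_add_eq_map_conv_map (by fun_prop) (by fun_prop)]
    rw [Finset.sum_fn, ih, Measure.infinitePi_map_eval]
    rfl

theorem exists_weakLimit_convSeq (A : ℕ → Finset ℝ) (hne : ∀ k, (A k).Nonempty)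
    (hnonneg : ∀ k, ∀ a ∈ A k, 0 ≤ a)
    (hsum : Summable fun k => ((A k).card : ℝ)⁻¹ * ∑ a ∈ A k, a / (1 + a)) :
    ∃ μ : Measure ℝ, IsProbabilityMeasure μ ∧ WeakLimit (convSeq A) μ := by
  have := fun k => isProbabilityMeasure_uniformDisc (hne k)
  set P := Measure.infinitePi fun k => uniformDisc (A k)
  have hcoord : ∀ k (φ : ℝ → ℝ≥0∞), Measurable φ →
      ∫⁻ ω, φ (ω k) ∂P = ((A k).card : ℝ≥0∞)⁻¹ * ∑ a ∈ A k, φ a := by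
    intro k φ hφ
    rw [← lintegral_map hφ (measurable_pi_apply k), Measure.infinitePi_map_eval,
      lintegral_uniformDisc]
  have hcoord_mem : ∀ k, ∀ᵐ ω ∂P, ω k ∈ A k := fun k =>
    ae_of_ae_map (measurable_pi_apply k).aemeasurable
      (by rw [Measure.infinitePi_map_eval]; exact ae_mem_uniformDisc)
  have hsummable : ∀ᵐ ω ∂P, Summable fun k => ω k := by
    have hX0 : ∀ k, ∀ᵐ ω ∂P, 0 ≤ ω k := fun k =>
      (hcoord_mem k).mono fun ω => hnonneg k (ω k)
    refine ae_summable_of_tsum_lintegral_div_one_add_ne_top measurable_pi_apply hX0 ?_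
    refine ne_of_eq_of_ne (tsum_congr fun k => ?_) hsum.tsum_ofReal_ne_top
    rw [hcoord k (fun a => ENNReal.ofReal (a / (1 + a))) (by fun_prop),
      ENNReal.ofReal_mul (by positivity),
      ENNReal.ofReal_inv_of_pos (by exact_mod_cast (hne k).card_pos), ENNReal.ofReal_natCast,
      ENNReal.ofReal_sum_of_nonneg fun a ha => div_one_add_nonneg (hnonneg k a ha)]
  have hlaw : convSeq A = fun n => P.map fun ω => ∑ k ∈ range (n + 1), ω k :=
    funext fun n => (infinitePi_map_sum_range_eq_convSeq A n).symm
  refine ⟨P.map fun ω => ∑' k, ω k,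
    Measure.isProbabilityMeasure_map (Measurable.tsum measurable_pi_apply).aemeasurable,
    hlaw ▸ weakLimit_map_of_ae_tendsto (fun n => by fun_prop) ?_⟩
  filter_upwards [hsummable] with ω hω
  exact hω.hasSum.tendsto_sum_nat.comp (tendsto_add_atTop_nat 1)

lemma card_inv_mul_sum_image_div_le {B : Finset ℕ} {b : ℕ} {P : ℝ} (hP : 0 < P)
    (hB : B.card = b) (hb : 0 < b) :
    ((B.image fun x : ℕ => (x : ℝ) / P).card : ℝ)⁻¹ *
        ∑ a ∈ B.image (fun x : ℕ => (x : ℝ) / P), a / (1 + a)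
      ≤ ((b : ℝ) - 1) / P + ((B \ range b).card : ℝ) / b := by
  have hinj : Function.Injective fun x : ℕ => (x : ℝ) / P := fun x y h => by
    simpa [div_left_inj' hP.ne'] using h
  have hf0 : ∀ x : ℕ, 0 ≤ (x : ℝ) / P := fun x => div_nonneg x.cast_nonneg hP.le
  have hb1 : (1 : ℝ) ≤ b := by exact_mod_cast hb
  set f : ℕ → ℝ := fun x => (x / P) / (1 + x / P)
  have hsmall : ∑ x ∈ B ∩ range b, f x ≤ b * ((b - 1) / P) := by
    refine (sum_le_card_nsmul _ _ (((b : ℝ) - 1) / P) fun x hx => ?_).trans ?_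
    · have hxb : (x : ℝ) ≤ b - 1 := by
        have := mem_range.1 (mem_inter.1 hx).2
        rw [le_sub_iff_add_le]; exact_mod_cast this
      exact (div_one_add_le_self (hf0 x)).trans (by gcongr)
    · rw [nsmul_eq_mul]
      gcongr
      exact_mod_cast (card_le_card inter_subset_right).trans (card_range b).le
  have hlarge : ∑ x ∈ B \ range b, f x ≤ (B \ range b).card := by
    simpa using sum_le_card_nsmul _ _ 1 fun x _ => div_one_add_le_one (hf0 x)
  rw [card_image_of_injective _ hinj, sum_image hinj.injOn, hB,
    ← sum_inter_add_sum_sdiff B (range b)]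
  calc (b : ℝ)⁻¹ * (∑ x ∈ B ∩ range b, f x + ∑ x ∈ B \ range b, f x)
      ≤ (b : ℝ)⁻¹ * (b * ((b - 1) / P) + (B \ range b).card) := by gcongr
    _ = ((b : ℝ) - 1) / P + ((B \ range b).card : ℝ) / b := by field_simp

theorem nearly_consecutive_infinite_convolution_exists_general
    (b N : ℕ → ℕ) (B : ℕ → Finset ℕ)
    (hb : ∀ k, 2 ≤ b k) (hbN : ∀ k, b k ≤ N k)
    (hBcard : ∀ k, (B k).card = b k)
    (c : ℕ → ℕ) (hc : ∀ k, c k = ((B k) \ Finset.range (b k)).card)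
    (hsum1 : Summable (fun k =>
      ((b k : ℝ) - 1) / ∏ i ∈ Finset.range (k + 1), (N i : ℝ)))
    (hsum2 : Summable (fun k => (c k : ℝ) / (b k : ℝ)))
    (A : ℕ → Finset ℝ)
    (hA : ∀ k, A k = (B k).image
      (fun x : ℕ => (x : ℝ) / ∏ i ∈ Finset.range (k + 1), (N i : ℝ))) :
    Summable (fun k => ((A k).card : ℝ)⁻¹ * ∑ a ∈ A k, a / (1 + a)) ∧
      ∃ μ : Measure ℝ, IsProbabilityMeasure μ ∧ WeakLimit (convSeq A) μ := by
  have hP : ∀ k, 0 < ∏ i ∈ range (k + 1), (N i : ℝ) := fun k =>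
    prod_pos fun i _ => by have := (hb i).trans (hbN i); positivity
  have hnonneg : ∀ k, ∀ a ∈ A k, 0 ≤ a := fun k a ha => by
    obtain ⟨x, -, rfl⟩ := mem_image.1 (hA k ▸ ha)
    exact div_nonneg x.cast_nonneg (hP k).le
  have hsum : Summable fun k => ((A k).card : ℝ)⁻¹ * ∑ a ∈ A k, a / (1 + a) := by
    refine .of_nonneg_of_le (fun k => ?_) (fun k => ?_) (hsum1.add hsum2)
    · exact mul_nonneg (by positivity)
        (sum_nonneg fun a ha => div_one_add_nonneg (hnonneg k a ha))
    · rw [hA k, hc k]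
      exact card_inv_mul_sum_image_div_le (hP k) (hBcard k) (by linarith [hb k])
  refine ⟨hsum, exists_weakLimit_convSeq A (fun k => ?_) hnonneg hsum⟩
  rw [hA k, image_nonempty, ← card_pos, hBcard k]
  linarith [hb k]

theorem nearly_consecutive_infinite_convolution_exists
    (b N : ℕ → ℕ) (B : ℕ → Finset ℕ)
    (hb : ∀ k, 2 ≤ b k) (hbN : ∀ k, b k ≤ N k) (hdvd : ∀ k, b k ∣ N k)
    (hBcard : ∀ k, (B k).card = b k)
    (hBmod : ∀ k, (B k).image (fun x => x % N k) = Finset.range (b k))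
    (c : ℕ → ℕ) (hc : ∀ k, c k = ((B k) \ Finset.range (b k)).card)
    (hsum1 : Summable (fun k =>
      ((b k : ℝ) - 1) / ∏ i ∈ Finset.range (k + 1), (N i : ℝ)))
    (hsum2 : Summable (fun k => (c k : ℝ) / (b k : ℝ)))
    (A : ℕ → Finset ℝ)
    (hA : ∀ k, A k = (B k).image
      (fun x : ℕ => (x : ℝ) / ∏ i ∈ Finset.range (k + 1), (N i : ℝ))) :
    Summable (fun k => ((A k).card : ℝ)⁻¹ * ∑ a ∈ A k, a / (1 + a)) ∧
      ∃ μ : Measure ℝ, IsProbabilityMeasure μ ∧ WeakLimit (convSeq A) μ :=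
  nearly_consecutive_infinite_convolution_exists_general b N B hb hbN hBcard c hc hsum1 hsum2 A hA
end
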